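/- arXiv:1710.02048 — 3 statements merged into one kernel-verified Lean document; each statement's English description precedes it below -/
import Mathlib

section
/- Let λ_min > 0 and M ≥ 3. Consider the set S = {λ + (μ₁/2)·exp(−iπ/M) + (μ₂/2)·exp(iπ/M) : λ ≥ −λ_min, μ₁ ≥ 0, μ₂ ≥ 0} ⊆ ℂ. Then every complex number z with |z| < λ_min·sin(π/M) lies in the interior of S. -/
/-!
With `θ = π / M`, the set `S` is the translate by `-lmin` of the closed sector spanned by the rays
through `e^{± iθ}`. The distance from its apex `-lmin` to the boundary rays is `lmin * sin θ`, so the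
open ball of that radius about `0` lies in `S`. Explicitly, `w = x + iy` is
`l + (μ₁ / 2) e^{-iθ} + (μ₂ / 2) e^{iθ}` with `μ₁, μ₂ = (|y| ∓ y) / sin θ` and `l = x - |y| cot θ`,
and `l ≥ -lmin` because `|y| cos θ - x sin θ ≤ ‖w‖` by Cauchy–Schwarz.
-/

open Complex Metric

def shiftedSector (r θ : ℝ) : Set ℂ :=
  {z | ∃ l μ₁ μ₂ : ℝ, -r ≤ l ∧ 0 ≤ μ₁ ∧ 0 ≤ μ₂ ∧
    z = (l : ℂ) + (μ₁ / 2 : ℂ) * exp (-θ * I) + (μ₂ / 2 : ℂ) * exp (θ * I)}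

lemma half_mul_exp_neg_mul_I_add_half_mul_exp_mul_I (θ μ₁ μ₂ : ℝ) :
    (μ₁ / 2 : ℂ) * exp (-θ * I) + (μ₂ / 2 : ℂ) * exp (θ * I) =
      ((μ₁ + μ₂) / 2 * Real.cos θ : ℝ) + ((μ₂ - μ₁) / 2 * Real.sin θ : ℝ) * I := by
  rw [← ofReal_neg, exp_ofReal_mul_I, exp_ofReal_mul_I, Real.cos_neg, Real.sin_neg]
  push_cast
  ring

lemma abs_im_mul_cos_sub_re_mul_sin_le_norm (w : ℂ) (θ : ℝ) :
    |w.im| * Real.cos θ - w.re * Real.sin θ ≤ ‖w‖ := by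
  rw [norm_eq_sqrt_sq_add_sq]
  refine (le_abs_self _).trans (Real.abs_le_sqrt ?_)
  nlinarith [sq_nonneg (|w.im| * Real.sin θ + w.re * Real.cos θ), Real.sin_sq_add_cos_sq θ,
    sq_abs w.im]

lemma mem_shiftedSector_of_norm_lt {r θ : ℝ} (hθ : 0 < Real.sin θ) {w : ℂ}
    (hw : ‖w‖ < r * Real.sin θ) : w ∈ shiftedSector r θ := by
  set x := w.re
  set y := w.im
  refine ⟨x - |y| * Real.cos θ / Real.sin θ, (|y| - y) / Real.sin θ, (|y| + y) / Real.sin θ, ?_,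
    div_nonneg (by linarith [le_abs_self y]) hθ.le, div_nonneg (by linarith [neg_abs_le y]) hθ.le,
    ?_⟩
  · have h := (abs_im_mul_cos_sub_re_mul_sin_le_norm w θ).trans_lt hw
    rw [neg_le_sub_iff_le_add, div_le_iff₀ hθ]
    linarith
  · have h_re : x - |y| * Real.cos θ / Real.sin θ
        + ((|y| - y) / Real.sin θ + (|y| + y) / Real.sin θ) / 2 * Real.cos θ = x := by
      field_simp
      ring
    have h_im : ((|y| + y) / Real.sin θ - (|y| - y) / Real.sin θ) / 2 * Real.sin θ = y := by
      field_simp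
      ring
    rw [add_assoc, half_mul_exp_neg_mul_I_add_half_mul_exp_mul_I, ← add_assoc, ← ofReal_add, h_re,
      h_im, re_add_im]

theorem mem_interior_of_small_norm_general (lmin : ℝ) (M : ℕ) (hM : 3 ≤ M)
    (S : Set ℂ)
    (hS : S = {z : ℂ | ∃ l μ₁ μ₂ : ℝ, -lmin ≤ l ∧ 0 ≤ μ₁ ∧ 0 ≤ μ₂ ∧
      z = (l : ℂ) + (μ₁ / 2 : ℂ) * Complex.exp (-(Real.pi / M) * Complex.I)
            + (μ₂ / 2 : ℂ) * Complex.exp ((Real.pi / M) * Complex.I)})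
    (z : ℂ) (hz : ‖z‖ < lmin * Real.sin (Real.pi / M)) :
    z ∈ interior S := by
  have hM_pos : (0 : ℝ) < M := by exact_mod_cast (by omega : 0 < M)
  have hsin : 0 < Real.sin (Real.pi / M) :=
    Real.sin_pos_of_pos_of_lt_pi (div_pos Real.pi_pos hM_pos)
      (div_lt_self Real.pi_pos (by exact_mod_cast (by omega : 1 < M)))
  have hS_eq : S = shiftedSector lmin (Real.pi / M) := by
    rw [hS, shiftedSector]
    push_cast
    rfl
  rw [hS_eq]
  exact interior_maximal (fun w hw => mem_shiftedSector_of_norm_lt hsin (mem_ball_zero_iff.mp hw))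
    isOpen_ball (mem_ball_zero_iff.mpr hz)

theorem mem_interior_of_small_norm (lmin : ℝ) (hl : 0 < lmin) (M : ℕ) (hM : 3 ≤ M)
    (S : Set ℂ)
    (hS : S = {z : ℂ | ∃ l μ₁ μ₂ : ℝ, -lmin ≤ l ∧ 0 ≤ μ₁ ∧ 0 ≤ μ₂ ∧
      z = (l : ℂ) + (μ₁ / 2 : ℂ) * Complex.exp (-(Real.pi / M) * Complex.I)
            + (μ₂ / 2 : ℂ) * Complex.exp ((Real.pi / M) * Complex.I)})
    (z : ℂ) (hz : ‖z‖ < lmin * Real.sin (Real.pi / M)) :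
    z ∈ interior S :=
  mem_interior_of_small_norm_general lmin M hM S hS z hz
end

section
/- Let λ_min > 0 and M ≥ 3, and let S = {λ + (μ₁/2)·exp(−iπ/M) + (μ₂/2)·exp(iπ/M) : λ ≥ −λ_min, μ₁ ≥ 0, μ₂ ≥ 0}. If z ∈ ℂ satisfies |z| < λ_min·sin(π/M), then z can be written as z = λ + (μ₁/2)e^{−iπ/M} + (μ₂/2)e^{iπ/M} with λ > −λ_min, μ₁ ≥ 0, μ₂ ≥ 0. -/
/-!
Put `θ = π / M` and `z = x + i y`. The two rays `e^{∓iθ}` absorb the imaginary part: take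
`μ₁ = (|y| - y) / sin θ` and `μ₂ = (|y| + y) / sin θ`, so that only the ray on the side of `y`
is used and it shifts the real part by `|y| cot θ`. This forces `λ = x - |y| cot θ`, and
`λ > -λ_min` is the Cauchy–Schwarz bound `x sin θ - |y| cos θ ≥ -‖z‖ > -λ_min sin θ`.
-/

open Complex

theorem neg_norm_le_re_mul_sin_sub_abs_im_mul_cos (z : ℂ) (θ : ℝ) :
    -‖z‖ ≤ z.re * Real.sin θ - |z.im| * Real.cos θ := by
  have cauchy_schwarz : (z.re * Real.sin θ - |z.im| * Real.cos θ) ^ 2 ≤ ‖z‖ ^ 2 := by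
    rw [Complex.sq_norm, Complex.normSq_apply]
    nlinarith [sq_nonneg (z.re * Real.cos θ + |z.im| * Real.sin θ), sq_abs z.im,
      Real.sin_sq_add_cos_sq θ]
  exact (abs_le.mp (abs_le_of_sq_le_sq cauchy_schwarz (norm_nonneg z))).1

theorem eq_ofReal_add_mul_exp_neg_mul_I_add_mul_exp_mul_I (θ : ℝ) (hs : Real.sin θ ≠ 0)
    (z : ℂ) :
    z = ((z.re - |z.im| * Real.cos θ / Real.sin θ : ℝ) : ℂ)
        + (((|z.im| - z.im) / Real.sin θ : ℝ) / 2 : ℂ) * exp (-θ * I)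
        + (((|z.im| + z.im) / Real.sin θ : ℝ) / 2 : ℂ) * exp (θ * I) := by
  conv_lhs => rw [← re_add_im z]
  push_cast
  rw [exp_mul_I, exp_mul_I, cos_neg, sin_neg, ← ofReal_cos, ← ofReal_sin]
  have hs' : (Real.sin θ : ℂ) ≠ 0 := ofReal_ne_zero.mpr hs
  field_simp
  ring

theorem exists_eq_add_mul_exp_neg_mul_I_add_mul_exp_mul_I_of_norm_lt (θ r : ℝ)
    (hs : 0 < Real.sin θ) (z : ℂ) (hz : ‖z‖ < r * Real.sin θ) :
    ∃ l μ₁ μ₂ : ℝ, -r < l ∧ 0 ≤ μ₁ ∧ 0 ≤ μ₂ ∧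
      z = (l : ℂ) + (μ₁ / 2 : ℂ) * exp (-θ * I) + (μ₂ / 2 : ℂ) * exp (θ * I) := by
  refine ⟨_, _, _, ?_, ?_, ?_, eq_ofReal_add_mul_exp_neg_mul_I_add_mul_exp_mul_I θ hs.ne' z⟩
  · have shift_lt : |z.im| * Real.cos θ / Real.sin θ < z.re + r := by
      rw [div_lt_iff₀ hs]
      linarith [neg_norm_le_re_mul_sin_sub_abs_im_mul_cos z θ]
    linarith
  · exact div_nonneg (by linarith [le_abs_self z.im]) hs.le
  · exact div_nonneg (by linarith [neg_abs_le z.im]) hs.le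

theorem rep_of_small_norm_general (lmin : ℝ) (M : ℕ)
    (z : ℂ) (hz : ‖z‖ < lmin * Real.sin (Real.pi / M)) :
    ∃ l μ₁ μ₂ : ℝ, -lmin < l ∧ 0 ≤ μ₁ ∧ 0 ≤ μ₂ ∧
      z = (l : ℂ) + (μ₁ / 2 : ℂ) * Complex.exp (-(Real.pi / M) * Complex.I)
            + (μ₂ / 2 : ℂ) * Complex.exp ((Real.pi / M) * Complex.I) := by
  have sin_nonneg : 0 ≤ Real.sin (Real.pi / M) :=
    Real.sin_nonneg_of_nonneg_of_le_pi (by positivity)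
      (div_nat_le_self_of_nonnneg Real.pi_pos.le M)
  have sin_pos : 0 < Real.sin (Real.pi / M) := by
    refine sin_nonneg.lt_of_ne fun h ↦ ?_
    rw [← h, mul_zero] at hz
    exact (norm_nonneg z).not_gt hz
  have rep := exists_eq_add_mul_exp_neg_mul_I_add_mul_exp_mul_I_of_norm_lt _ lmin sin_pos z hz
  push_cast at rep
  exact rep

theorem rep_of_small_norm (lmin : ℝ) (hl : 0 < lmin) (M : ℕ) (hM : 3 ≤ M)
    (z : ℂ) (hz : ‖z‖ < lmin * Real.sin (Real.pi / M)) :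
    ∃ l μ₁ μ₂ : ℝ, -lmin < l ∧ 0 ≤ μ₁ ∧ 0 ≤ μ₂ ∧
      z = (l : ℂ) + (μ₁ / 2 : ℂ) * Complex.exp (-(Real.pi / M) * Complex.I)
            + (μ₂ / 2 : ℂ) * Complex.exp ((Real.pi / M) * Complex.I) :=
  rep_of_small_norm_general lmin M z hz
end

section
/- Let x ∈ ℂⁿ and X ∈ ℂ^{n×n} Hermitian with X ⪰ x x†. Suppose the block matrix [[1, x†],[x, X]] has a decomposition as Σ_{j=1}^{n+1} (t_j; v_j)(t_j; v_j)† with t_j ∈ ℝ, v_j ∈ ℂⁿ. Define y ∈ ℝ^{2n} by stacking Σ_j t_j Re(v_j) and Σ_j t_j Im(v_j), and Y = Σ_j [Re(v_j); Im(v_j)][Re(v_j); Im(v_j)]ᵀ. Then [[1, yᵀ],[y, Y]] ⪰ 0 and Y_{i,i} + Y_{n+i,n+i} = X_{i,i} for all i = 1, ..., n. -/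
open Matrix
open scoped ComplexOrder

/-!
The (1,1) entry of the decomposition gives `∑ tₖ² = 1`, so the real block matrix is the sum of
the rank-one matrices `rₖ rₖᵀ` with `rₖ = (tₖ; Re vₖ; Im vₖ)`, hence positive semidefinite.
Its diagonal identity is `|z|² = (Re z)² + (Im z)²` applied to the diagonal of `X = ∑ vₖ vₖ†`.
-/

lemma Matrix.fromBlocks_one_eq_sum_vecMulVec {ι m R : Type*} [Fintype ι] [CommSemiring R]
    (t : ι → R) (w : ι → m → R) (ht : ∑ k, t k * t k = 1) :
    fromBlocks (1 : Matrix Unit Unit R)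
        (of fun _ q => ∑ k, t k * w k q) (of fun p _ => ∑ k, t k * w k p)
        (∑ k, of fun p q => w k p * w k q)
      = ∑ k, vecMulVec (Sum.elim (fun _ : Unit => t k) (w k))
          (Sum.elim (fun _ : Unit => t k) (w k)) := by
  ext (_ | p) (_ | q) <;> simp [Matrix.sum_apply, vecMulVec, ← ht, mul_comm]

theorem real_lift_of_decomposition_general {n : ℕ}
    (x : Fin n → ℂ) (X : Matrix (Fin n) (Fin n) ℂ)
    (t : Fin (n + 1) → ℝ) (v : Fin (n + 1) → Fin n → ℂ)
    (hdec : Matrix.fromBlocks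
        (1 : Matrix Unit Unit ℂ)
        (Matrix.of fun (_ : Unit) j => (starRingEnd ℂ) (x j))
        (Matrix.of fun i (_ : Unit) => x i) X
      = ∑ k : Fin (n + 1), Matrix.fromBlocks
          (Matrix.of fun (_ _ : Unit) => ((t k : ℂ) * (starRingEnd ℂ) (t k : ℂ)))
          (Matrix.of fun (_ : Unit) j => (t k : ℂ) * (starRingEnd ℂ) (v k j))
          (Matrix.of fun i (_ : Unit) => v k i * (starRingEnd ℂ) (t k : ℂ))
          (Matrix.of fun i j => v k i * (starRingEnd ℂ) (v k j)))
    (w : Fin (n + 1) → (Fin n ⊕ Fin n) → ℝ)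
    (hw : ∀ k, w k = Sum.elim (fun i => (v k i).re) (fun i => (v k i).im))
    (y : (Fin n ⊕ Fin n) → ℝ)
    (hy : y = fun p => ∑ k, t k * w k p)
    (Y : Matrix (Fin n ⊕ Fin n) (Fin n ⊕ Fin n) ℝ)
    (hY : Y = ∑ k, Matrix.of fun p q => w k p * w k q) :
    (Matrix.fromBlocks
        (1 : Matrix Unit Unit ℝ)
        (Matrix.of fun (_ : Unit) q => y q)
        (Matrix.of fun p (_ : Unit) => y p)
        Y).PosSemidef
    ∧ ∀ i, Y (Sum.inl i) (Sum.inl i) + Y (Sum.inr i) (Sum.inr i) = (X i i).re := by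
  have ht : ∑ k, t k * t k = 1 := by
    have h := congrFun₂ hdec (Sum.inl ()) (Sum.inl ())
    simp only [Matrix.sum_apply, fromBlocks_apply₁₁, of_apply, one_apply_eq, Complex.conj_ofReal,
      ← Complex.ofReal_mul, ← Complex.ofReal_sum] at h
    exact_mod_cast h.symm
  have hXdiag : ∀ i, (X i i).re = ∑ k, Complex.normSq (v k i) := by
    intro i
    have h := congrFun₂ hdec (Sum.inr i) (Sum.inr i)
    simp only [Matrix.sum_apply, fromBlocks_apply₂₂, of_apply, Complex.mul_conj,
      ← Complex.ofReal_sum] at h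
    rw [h, Complex.ofReal_re]
  subst hy hY
  refine ⟨posSemidef_iff_eq_sum_vecMulVec.2
    ⟨n + 1, fun k => Sum.elim (fun _ => t k) (w k), ?_⟩, fun i => ?_⟩
  · simpa only [star_trivial] using fromBlocks_one_eq_sum_vecMulVec t w ht
  · simp only [Matrix.sum_apply, of_apply, hw, Sum.elim_inl, Sum.elim_inr, ← Finset.sum_add_distrib,
      hXdiag, Complex.normSq_apply]

theorem real_lift_of_decomposition {n : ℕ}
    (x : Fin n → ℂ) (X : Matrix (Fin n) (Fin n) ℂ)
    (hX : (X - Matrix.of fun i j => x i * (starRingEnd ℂ) (x j)).PosSemidef)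
    (t : Fin (n + 1) → ℝ) (v : Fin (n + 1) → Fin n → ℂ)
    (hdec : Matrix.fromBlocks
        (1 : Matrix Unit Unit ℂ)
        (Matrix.of fun (_ : Unit) j => (starRingEnd ℂ) (x j))
        (Matrix.of fun i (_ : Unit) => x i) X
      = ∑ k : Fin (n + 1), Matrix.fromBlocks
          (Matrix.of fun (_ _ : Unit) => ((t k : ℂ) * (starRingEnd ℂ) (t k : ℂ)))
          (Matrix.of fun (_ : Unit) j => (t k : ℂ) * (starRingEnd ℂ) (v k j))
          (Matrix.of fun i (_ : Unit) => v k i * (starRingEnd ℂ) (t k : ℂ))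
          (Matrix.of fun i j => v k i * (starRingEnd ℂ) (v k j)))
    (w : Fin (n + 1) → (Fin n ⊕ Fin n) → ℝ)
    (hw : ∀ k, w k = Sum.elim (fun i => (v k i).re) (fun i => (v k i).im))
    (y : (Fin n ⊕ Fin n) → ℝ)
    (hy : y = fun p => ∑ k, t k * w k p)
    (Y : Matrix (Fin n ⊕ Fin n) (Fin n ⊕ Fin n) ℝ)
    (hY : Y = ∑ k, Matrix.of fun p q => w k p * w k q) :
    (Matrix.fromBlocks
        (1 : Matrix Unit Unit ℝ)
        (Matrix.of fun (_ : Unit) q => y q)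
        (Matrix.of fun p (_ : Unit) => y p)
        Y).PosSemidef
    ∧ ∀ i, Y (Sum.inl i) (Sum.inl i) + Y (Sum.inr i) (Sum.inr i) = (X i i).re :=
  real_lift_of_decomposition_general x X t v hdec w hw y hy Y hY
end
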